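/- arXiv:1806.09242 — 5 statements merged into one kernel-verified Lean document; each statement's English description precedes it below -/
import Mathlib

section
/- Let A be an ℓ-algebra and p ∈ A an idempotent. If there exists an idempotent p(t) in the polynomial ring A[t] with p(0) = 0 and p(1) = p, then p = 0. -/
/-- If an idempotent `p` in a (not necessarily unital) associative algebra `A`
over a field `ℓ` is connected to `0` by an idempotent of the polynomial ring
`A[t]`, then `p = 0`.  Since `A` need not be unital, polynomials over `A` are
modeled as finitely supported functions `ℕ →₀ A` with the convolution product;
evaluation at `t = 0` is the constant coefficient and evaluation at `t = 1` is
the sum of the coefficients. -/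
theorem stmt0 (ℓ : Type*) [Field ℓ] (A : Type*) [NonUnitalRing A]
    [Module ℓ A] [SMulCommClass ℓ A A] [IsScalarTower ℓ A A]
    (p : A) (hp : p * p = p)
    (h : ∃ q : ℕ →₀ A,
      (q.sum fun a₁ b₁ => q.sum fun a₂ b₂ => Finsupp.single (a₁ + a₂) (b₁ * b₂)) = q ∧
      q 0 = 0 ∧ (q.sum fun _ a => a) = p) :
    p = 0 := by
  obtain ⟨q, hq, hq0, hsum⟩ := h
  have key : ∀ n, q n = 0 := by
    intro n
    induction n using Nat.strong_induction_on with
    | _ n ih =>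
      have hn := congrFun (congrArg DFunLike.coe hq) n
      simp only [Finsupp.sum_apply, Finsupp.sum, Finset.sum_apply', Finsupp.single_apply] at hn
      rw [← hn]
      apply Finset.sum_eq_zero; intro i _
      apply Finset.sum_eq_zero; intro j _
      split
      · rename_i hij
        rcases Nat.lt_or_ge i n with h1 | h1
        · rw [ih i h1, zero_mul]
        · have hj0 : j = 0 := by omega
          rw [hj0, hq0, mul_zero]
      · rfl
  have hq' : q = 0 := Finsupp.ext key
  rw [← hsum, hq', Finsupp.sum_zero_index]
end

section
/- Let A be a unital ℓ-algebra and p ∈ A an idempotent. If there exists an idempotent p(t) in A[t] with p(0) = 1 and p(1) = p, then p = 1. -/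
/-! An idempotent `e` of `R[X]` equals `e * e`, whose trailing degree is at least twice that
of `e`; so a nonzero idempotent has trailing degree `0`, i.e. a nonzero constant coefficient.
Applied to the idempotent `1 - q`, which vanishes at `0`, this forces `q = 1`, hence `p = q(1) = 1`. -/

namespace Polynomial

section Semiring

variable {R : Type*} [Semiring R]

theorem natTrailingDegree_eq_zero_of_isIdempotentElem {e : R[X]} (he : IsIdempotentElem e)
    (hne : e ≠ 0) : e.natTrailingDegree = 0 := by
  have h := le_natTrailingDegree_mul (p := e) (q := e) (he.eq.symm ▸ hne)
  rw [he.eq] at h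
  omega

theorem eq_zero_of_isIdempotentElem_of_coeff_zero {e : R[X]} (he : IsIdempotentElem e)
    (h0 : e.coeff 0 = 0) : e = 0 := by
  by_contra hne
  have hd := natTrailingDegree_eq_zero_of_isIdempotentElem he hne
  exact hne (trailingCoeff_eq_zero.mp (by rwa [trailingCoeff, hd]))

end Semiring

theorem eq_one_of_isIdempotentElem_of_coeff_zero {R : Type*} [Ring R] {q : R[X]}
    (hq : IsIdempotentElem q) (h0 : q.coeff 0 = 1) : q = 1 :=
  (sub_eq_zero.mp (eq_zero_of_isIdempotentElem_of_coeff_zero hq.one_sub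
    (by rw [coeff_sub, coeff_one_zero, h0, sub_self]))).symm

end Polynomial

theorem stmt1_general (A : Type*) [Ring A]
    (p : A)
    (h : ∃ q : Polynomial A, q * q = q ∧ q.eval 0 = 1 ∧ q.eval 1 = p) :
    p = 1 := by
  obtain ⟨q, hq, h0, h1⟩ := h
  have hq1 : q = 1 :=
    Polynomial.eq_one_of_isIdempotentElem_of_coeff_zero hq
      (by rwa [Polynomial.coeff_zero_eq_eval_zero])
  rw [← h1, hq1, Polynomial.eval_one]

/-- If an idempotent `p` in a unital algebra `A` over a commutative ring `ℓ`
is connected to `1` by an idempotent of the polynomial ring `A[t]`, then `p = 1`. -/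
theorem stmt1 (ℓ : Type*) [CommRing ℓ] (A : Type*) [Ring A] [Algebra ℓ A]
    (p : A) (hp : p * p = p)
    (h : ∃ q : Polynomial A, q * q = q ∧ q.eval 0 = 1 ∧ q.eval 1 = p) :
    p = 1 :=
  stmt1_general A p h
end

section
/- Let A and R be unital rings, φ, ψ : A → R ring homomorphisms, n ≥ 1, and u ∈ GLₙ(R) such that conjugation by u carries the block-diagonal embedding ιₙφ to ιₙψ, i.e. u · diag(φ(a),0,…,0) · u⁻¹ = diag(ψ(a),0,…,0) for all a ∈ A. Then there exist x, y ∈ R with x φ(a) y = ψ(a), φ(a) y x φ(a') = φ(a a'), for all a, a' ∈ A. If moreover φ and ψ are unital, then x can be chosen invertible with y = x⁻¹. -/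
/-!
Put `x = u₀₀` and `y = (u⁻¹)₀₀`. Reading the `(0,0)` entry of `u E₀₀(φ a) u⁻¹ = E₀₀(ψ a)` gives
`x φ(a) y = ψ(a)`. For the second relation, the hypothesis says `E₀₀(φ a) u⁻¹ = u⁻¹ E₀₀(ψ a)`, so
right multiplication by the idempotent `E₀₀(1)` fixes `E₀₀(φ a) u⁻¹`; multiplying by `u` and taking
the `(0,0)` entry yields `φ(a) y x = φ(a)`. When `φ` and `ψ` are unital, `a = 1` turns the two
relations into `x y = 1` and `y x = 1`.
-/

namespace Matrix

theorem mul_single_mul_apply {l m n o α : Type*} [Fintype m] [Fintype n] [DecidableEq m]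
    [DecidableEq n] [NonUnitalNonAssocSemiring α] (M : Matrix l m α) (i : m) (j : n) (c : α)
    (N : Matrix n o α) (p : l) (q : o) :
    (M * single i j c * N) p q = M p i * c * N j q := by
  rw [mul_apply, Finset.sum_eq_single j, mul_single_apply_same]
  · intro k _ hk
    rw [mul_single_apply_of_ne _ _ _ _ _ hk, zero_mul]
  · exact fun hj => absurd (Finset.mem_univ j) hj

section ConjSingle

variable {n α : Type*} [Fintype n] [DecidableEq n] [Semiring α] {u : (Matrix n n α)ˣ} {i : n}
  {c d : α}

theorem val_apply_mul_mul_inv_apply_of_conj_single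
    (h : u.val * single i i c * (u⁻¹).val = single i i d) :
    u.val i i * c * (u⁻¹).val i i = d := by
  simpa only [mul_single_mul_apply, single_apply_same] using congr_fun₂ h i i

theorem mul_inv_apply_mul_val_apply_of_conj_single
    (h : u.val * single i i c * (u⁻¹).val = single i i d) :
    c * (u⁻¹).val i i * u.val i i = c := by
  have hcomm : single i i c * (u⁻¹).val = (u⁻¹).val * single i i d := by
    rw [← h, ← mul_assoc, ← mul_assoc, Units.inv_mul, one_mul]
  calc c * (u⁻¹).val i i * u.val i i
      = (single i i c * (u⁻¹).val * single i i (1 : α) * u.val) i i := by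
        rw [mul_single_mul_apply, mul_one, single_mul_apply_same]
    _ = (single i i c * (u⁻¹).val * u.val) i i := by
        rw [hcomm, mul_assoc (u⁻¹).val, single_mul_single_same, mul_one]
    _ = c := by rw [mul_assoc, Units.inv_mul, mul_one, single_apply_same]

end ConjSingle

end Matrix

/-- Let `A`, `R` be unital rings, `φ, ψ : A → R` (not necessarily unital) ring
homomorphisms, `n ≥ 1` and `u ∈ GLₙ(R)` such that conjugation by `u` carries the
corner embedding `ιₙφ` to `ιₙψ`.  Then there are `x, y ∈ R` with
`x φ(a) y = ψ(a)` and `φ(a) y x φ(a') = φ(a a')` for all `a, a'`.  If moreover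
`φ` and `ψ` are unital, then one may take `x` invertible and `y = x⁻¹`. -/
theorem stmt7 (A R : Type*) [Ring A] [Ring R] (φ ψ : A →ₙ+* R)
    (n : ℕ) (hn : 0 < n) (u : (Matrix (Fin n) (Fin n) R)ˣ)
    (h : ∀ a : A,
      u.val * Matrix.single ⟨0, hn⟩ ⟨0, hn⟩ (φ a) * (u⁻¹).val =
        Matrix.single ⟨0, hn⟩ ⟨0, hn⟩ (ψ a)) :
    (∃ x y : R, (∀ a : A, x * φ a * y = ψ a) ∧
      (∀ a a' : A, φ a * y * x * φ a' = φ (a * a'))) ∧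
    ((φ 1 = 1 ∧ ψ 1 = 1) →
      ∃ v : Rˣ, ∀ a : A, v.val * φ a * (v⁻¹).val = ψ a) := by
  set x := u.val ⟨0, hn⟩ ⟨0, hn⟩
  set y := (u⁻¹).val ⟨0, hn⟩ ⟨0, hn⟩
  have hconj (a : A) : x * φ a * y = ψ a :=
    Matrix.val_apply_mul_mul_inv_apply_of_conj_single (h a)
  have hidem (a : A) : φ a * y * x = φ a :=
    Matrix.mul_inv_apply_mul_val_apply_of_conj_single (h a)
  refine ⟨⟨x, y, hconj, fun a a' => by rw [hidem, map_mul]⟩, ?_⟩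
  rintro ⟨hφ, hψ⟩
  have hxy : x * y = 1 := by simpa only [hφ, hψ, mul_one] using hconj 1
  have hyx : y * x = 1 := by simpa only [hφ, one_mul] using hidem 1
  exact ⟨⟨x, y, hxy, hyx⟩, hconj⟩
end

section
/- Let R be a unital ring, E a finite directed graph with no sinks, and φ, ψ : L(E) → R unital ring homomorphisms that agree on all elements e e* for e ∈ E¹. Set u = Σ_{e ∈ E¹} ψ(e) φ(e*). Then u is invertible in the subring R_φ = ⊕_{e∈E¹} φ(ee*) R φ(ee*) (with identity Σ_e φ(ee*) = 1), with inverse u' = Σ_{e∈E¹} φ(e) ψ(e*); and ψ(e) = u φ(e), ψ(e*) = φ(e*) u⁻¹ for all e ∈ E¹. -/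
/-- The images `(P, S, T)` of the vertices, edges and ghost edges of a finite
graph (with source `s` and range `r`) under a unital ring homomorphism
`L(E) → R` satisfy exactly these Leavitt path algebra relations; conversely, by
the universal property of `L(E)`, any such family arises from a unique unital
homomorphism. -/
def IsLeavittFamily {V E R : Type*} [Fintype V] [Fintype E] [DecidableEq V]
    [DecidableEq E] [Ring R] (s r : E → V) (P : V → R) (S T : E → R) : Prop :=
  (∀ v w, P v * P w = if v = w then P v else 0) ∧
  (∑ v, P v = 1) ∧
  (∀ e, P (s e) * S e = S e ∧ S e * P (r e) = S e) ∧
  (∀ e, P (r e) * T e = T e ∧ T e * P (s e) = T e) ∧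
  (∀ e f, T e * S f = if e = f then P (r e) else 0) ∧
  (∀ v, P v = ∑ e ∈ Finset.univ.filter fun e => s e = v, S e * T e)

/-- Let `R` be a unital ring, `E` a finite graph with no sinks and
`φ, ψ : L(E) → R` unital ring homomorphisms agreeing on all the `e e*`
(`e ∈ E¹`).  Then `u = Σ_e ψ(e) φ(e*)` is invertible in the subring
`R_φ = ⊕_e φ(ee*) R φ(ee*)` with inverse `u' = Σ_e φ(e) ψ(e*)`, and
`ψ(e) = u φ(e)`, `ψ(e*) = φ(e*) u⁻¹` for all `e ∈ E¹`.  The homomorphisms are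
encoded by the images `(P, S, T)` resp. `(P', S', T')` of the generators. -/
theorem stmt14 {V E R : Type*} [Fintype V] [Fintype E] [DecidableEq V]
    [DecidableEq E] [Ring R] (s r : E → V)
    (hns : ∀ v : V, ∃ e : E, s e = v)
    (P : V → R) (S T : E → R) (P' : V → R) (S' T' : E → R)
    (hφ : IsLeavittFamily s r P S T) (hψ : IsLeavittFamily s r P' S' T')
    (hagree : ∀ e, S' e * T' e = S e * T e) :
    ∀ u u' : R, u = ∑ e, S' e * T e → u' = ∑ e, S e * T' e →
      u * u' = 1 ∧ u' * u = 1 ∧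
      (u = ∑ e, (S e * T e) * u * (S e * T e)) ∧
      (u' = ∑ e, (S e * T e) * u' * (S e * T e)) ∧
      (∀ e, S' e = u * S e) ∧ (∀ e, T' e = T e * u') := by
  obtain ⟨hP, hPsum, hS, hT, hTS, hCK⟩ := hφ
  obtain ⟨hP', hPsum', hS', hT', hTS', hCK'⟩ := hψ
  have hPP : ∀ v, P v = P' v := by
    intro v
    rw [hCK v, hCK' v]
    exact Finset.sum_congr rfl fun e _ => (hagree e).symm
  have hone : ∑ e, S e * T e = 1 := by
    rw [← hPsum, ← Finset.sum_fiberwise Finset.univ s (fun e => S e * T e)]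
    exact Finset.sum_congr rfl fun v _ => (hCK v).symm
  have hone' : ∑ e, S' e * T' e = 1 := by
    rw [← hone]; exact Finset.sum_congr rfl fun e _ => hagree e
  intro u u' hu hu'
  have hA : ∀ e, u * S e = S' e := by
    intro e
    rw [hu, Finset.sum_mul]
    have h2 : ∀ f, S' f * T f * S e = if f = e then S' e else 0 := by
      intro f
      rw [mul_assoc, hTS f e]
      split
      · rename_i h; subst h; rw [hPP, (hS' f).2]
      · rw [mul_zero]
    simp [h2]
  have hB : ∀ e, T e * u' = T' e := by
    intro e
    rw [hu', Finset.mul_sum]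
    have h2 : ∀ f, T e * (S f * T' f) = if f = e then T' e else 0 := by
      intro f
      rw [← mul_assoc, hTS e f]
      split
      · rename_i h
        rw [if_pos h.symm, h, hPP, (hT' f).1]
      · rename_i h
        rw [if_neg (fun h' => h h'.symm), zero_mul]
    simp only [h2]
    simp
  have huu' : u * u' = 1 := by
    rw [hu', Finset.mul_sum]
    calc ∑ f, u * (S f * T' f) = ∑ f, S' f * T' f := by
          refine Finset.sum_congr rfl fun f _ => ?_
          rw [← mul_assoc, hA f]
      _ = 1 := hone'
  have hu'u : u' * u = 1 := by
    rw [hu, Finset.mul_sum]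
    calc ∑ f, u' * (S' f * T f) = ∑ f, S f * T f := by
          refine Finset.sum_congr rfl fun f _ => ?_
          rw [hu', Finset.sum_mul]
          have h2 : ∀ g, S g * T' g * (S' f * T f) = if g = f then S f * T f else 0 := by
            intro g
            rw [mul_assoc, ← mul_assoc (T' g), hTS' g f]
            split
            · rename_i h
              rw [h, ← hPP, (hT f).1]
            · rw [zero_mul, mul_zero]
          simp [h2]
      _ = 1 := hone
  have hC : ∀ e, (S e * T e) * u * (S e * T e) = S' e * T e := by
    intro e
    have h1 : (S e * T e) * u = S' e * T e := by
      rw [← hagree e, hu, Finset.mul_sum]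
      have h2 : ∀ f, S' e * T' e * (S' f * T f) = if f = e then S' e * T e else 0 := by
        intro f
        rw [mul_assoc, ← mul_assoc (T' e), hTS' e f]
        split
        · rename_i h
          rw [if_pos h.symm, ← h, ← hPP, (hT e).1]
        · rename_i h
          rw [if_neg (fun h' => h h'.symm), zero_mul, mul_zero]
      simp [h2]
    rw [h1, mul_assoc, ← mul_assoc (T e), hTS e e, if_pos rfl, (hT e).1]
  have hD : ∀ e, (S e * T e) * u' * (S e * T e) = S e * T' e := by
    intro e
    have h1 : (S e * T e) * u' = S e * T' e := by
      rw [hu', Finset.mul_sum]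
      have h2 : ∀ f, S e * T e * (S f * T' f) = if f = e then S e * T' e else 0 := by
        intro f
        rw [mul_assoc, ← mul_assoc (T e), hTS e f]
        split
        · rename_i h
          rw [if_pos h.symm, ← h, hPP, (hT' e).1]
        · rename_i h
          rw [if_neg (fun h' => h h'.symm), zero_mul, mul_zero]
      simp [h2]
    rw [h1, ← hagree e, mul_assoc, ← mul_assoc (T' e), hTS' e e, if_pos rfl, (hT' e).1]
  refine ⟨huu', hu'u, ?_, ?_, fun e => (hA e).symm, fun e => (hB e).symm⟩
  · calc u = ∑ e, S' e * T e := hu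
      _ = ∑ e, (S e * T e) * u * (S e * T e) := Finset.sum_congr rfl fun e _ => (hC e).symm
  · calc u' = ∑ e, S e * T' e := hu'
      _ = ∑ e, (S e * T e) * u' * (S e * T e) := Finset.sum_congr rfl fun e _ => (hD e).symm
end

section
/- Let R be a unital ring, E a finite graph with no sinks, φ : L(E) → R a unital ring homomorphism, and g a unit of the subring R_φ = ⊕_{e∈E¹} φ(ee*) R φ(ee*). Then the prescriptions v ↦ φ(v), e ↦ g φ(e), e* ↦ φ(e*) g⁻¹ extend (uniquely) to a unital ring homomorphism ψ : L(E) → R, and ψ agrees with φ on all vertices and on all elements e e*. -/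
/-- Let `R` be a unital ring, `E` a finite graph with no sinks,
`φ : L(E) → R` a unital ring homomorphism (encoded by the Leavitt family
`(P, S, T)` of images of the generators) and `g` a unit of the subring
`R_φ = ⊕_e φ(ee*) R φ(ee*)`, with inverse `g'`.  Then `v ↦ φ(v)`,
`e ↦ g φ(e)`, `e* ↦ φ(e*) g⁻¹` extend (uniquely) to a unital ring homomorphism
`ψ : L(E) → R`, i.e. `(P, g·S, T·g')` is again a Leavitt family, and `ψ` agrees
with `φ` on all vertices and on all the `e e*`. -/
theorem stmt15 {V E R : Type*} [Fintype V] [Fintype E] [DecidableEq V]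
    [DecidableEq E] [Ring R] (s r : E → V)
    (hns : ∀ v : V, ∃ e : E, s e = v)
    (P : V → R) (S T : E → R)
    (hφ : IsLeavittFamily s r P S T)
    (g g' : R) (hgg' : g * g' = 1) (hg'g : g' * g = 1)
    (hgmem : g = ∑ e, (S e * T e) * g * (S e * T e)) :
    IsLeavittFamily s r P (fun e => g * S e) (fun e => T e * g') ∧
    (∀ e, (g * S e) * (T e * g') = S e * T e) := by
  obtain ⟨h1, h2, h3, h4, h5, h6⟩ := hφ
  -- orthogonality of the idempotents Q e = S e * T e
  have hQQ : ∀ e f : E, (S e * T e) * (S f * T f) =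
      if e = f then S e * T e else 0 := by
    intro e f
    have : (S e * T e) * (S f * T f) = S e * (T e * S f) * T f := by noncomm_ring
    rw [this, h5]
    split
    · next h => subst h; rw [mul_assoc, (h4 e).1]
    · simp
  -- g commutes with each Q e
  have hcomm : ∀ e : E, g * (S e * T e) = (S e * T e) * g := by
    intro e
    have assoc1 : ∀ f : E, (S f * T f * g * (S f * T f)) * (S e * T e) =
        S f * T f * g * (S f * T f * (S e * T e)) := fun f => by noncomm_ring
    have assoc2 : ∀ f : E, (S e * T e) * (S f * T f * g * (S f * T f)) =
        (S e * T e * (S f * T f)) * g * (S f * T f) := fun f => by noncomm_ring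
    have key1 : g * (S e * T e) = (S e * T e) * g * (S e * T e) := by
      conv_lhs => rw [hgmem]
      rw [Finset.sum_mul]
      simp only [assoc1, hQQ]
      rw [Finset.sum_eq_single e]
      · rw [if_pos rfl]
      · intro f _ hfe
        rw [if_neg hfe, mul_zero]
      · simp
    have key2 : (S e * T e) * g = (S e * T e) * g * (S e * T e) := by
      conv_lhs => rw [hgmem]
      rw [Finset.mul_sum]
      simp only [assoc2, hQQ]
      rw [Finset.sum_eq_single e]
      · rw [if_pos rfl]
      · intro f _ hfe
        rw [if_neg (fun h => hfe h.symm), zero_mul, zero_mul]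
      · simp
    rw [key1, ← key2]
  -- g commutes with each P v
  have hPcomm : ∀ v : V, g * P v = P v * g := by
    intro v
    rw [h6 v, Finset.mul_sum, Finset.sum_mul]
    exact Finset.sum_congr rfl fun e _ => hcomm e
  -- g' commutes with each P v
  have hP'comm : ∀ v : V, g' * P v = P v * g' := by
    intro v
    calc g' * P v = g' * P v * (g * g') := by rw [hgg', mul_one]
      _ = g' * (P v * g) * g' := by noncomm_ring
      _ = g' * (g * P v) * g' := by rw [hPcomm]
      _ = (g' * g) * (P v * g') := by noncomm_ring
      _ = P v * g' := by rw [hg'g, one_mul]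
  -- the key identity (g S e)(T e g') = S e T e
  have hkey : ∀ e : E, (g * S e) * (T e * g') = S e * T e := by
    intro e
    calc (g * S e) * (T e * g') = (g * (S e * T e)) * g' := by noncomm_ring
      _ = (S e * T e) * (g * g') := by rw [hcomm]; noncomm_ring
      _ = S e * T e := by rw [hgg', mul_one]
  refine ⟨⟨h1, h2, ?_, ?_, ?_, ?_⟩, hkey⟩
  · intro e
    constructor
    · calc P (s e) * (g * S e) = (P (s e) * g) * S e := by noncomm_ring
        _ = g * (P (s e) * S e) := by rw [← hPcomm]; noncomm_ring
        _ = g * S e := by rw [(h3 e).1]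
    · rw [mul_assoc, (h3 e).2]
  · intro e
    constructor
    · rw [← mul_assoc, (h4 e).1]
    · calc (T e * g') * P (s e) = T e * (g' * P (s e)) := by noncomm_ring
        _ = (T e * P (s e)) * g' := by rw [hP'comm]; noncomm_ring
        _ = T e * g' := by rw [(h4 e).2]
  · intro e f
    calc (T e * g') * (g * S f) = T e * (g' * g) * S f := by noncomm_ring
      _ = T e * S f := by rw [hg'g]; noncomm_ring
      _ = if e = f then P (r e) else 0 := h5 e f
  · intro v
    rw [h6 v]
    exact Finset.sum_congr rfl fun e _ => (hkey e).symm
end
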